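/- arXiv:2004.00462 — 2 statements merged into one kernel-verified Lean document; each statement's English description precedes it below -/
import Mathlib

section
/- If the vector-valued Hardy-Littlewood maximal operator satisfies the strong L^p bound ‖(∑_j (M f_j)^r)^{1/r}‖_p ≤ C ‖(∑_j f_j^r)^{1/r}‖_p for sequences of functions on ℝ (1 < r, p < ∞), then for any measure-preserving transformation τ of a probability space (X, μ), the ergodic maximal operator M♯f(x) = sup_n (1/n) ∑_{k=0}^{n-1} |f(τ^k x)| satisfies the same vector-valued strong L^p bound with the same constant: ‖(∑_j (M♯ f_j)^r)^{1/r}‖_{L^p(X)} ≤ C ‖(∑_j |f_j|^r)^{1/r}‖_{L^p(X)}. -/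
/-!
Calderón transference. Fix `x`, `N` and `L`, and transplant the orbit `m ↦ f_j (τ^m x)`,
`m < L + N + 1`, to the step functions `u_j t = f_j (τ^⌊t⌋ x)` on `[0, L + N + 1)`. For `t` in
`[m, m + 1)` with `m < L`, every ergodic average of length at most `N + 1` at `τ^m x` is an average
of `|u_j|` over an interval containing `t`, so the Hardy–Littlewood bound for `u` gives
`∑_{m<L} ‖M♯_N f (τ^m x)‖^p ≤ C^p ∑_{m<L+N+1} ‖f (τ^m x)‖^p`, where `M♯_N` is the maximal
function truncated at `N`. Integrating against the invariant measure `μ` yields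
`L ∫ ‖M♯_N f‖^p ≤ C^p (L + N + 1) ∫ ‖f‖^p`; let `L → ∞`, then `N → ∞` by monotone convergence.
-/

open MeasureTheory ENNReal

/-- The ergodic maximal function: `M♯ f x = sup_{n ≥ 1} (1/n) ∑_{k<n} |f(τ^k x)|`. -/
noncomputable def ergMax {X : Type*} (τ : X → X) (f : X → ℝ) (x : X) : ℝ≥0∞ :=
  ⨆ n : ℕ, (∑ k ∈ Finset.range (n + 1), ENNReal.ofReal |f (τ^[k] x)|) / (n + 1)

/-- The Hardy–Littlewood maximal function on `ℝ`:
`Mf(t) = sup over intervals I containing t of (1/|I|) ∫_I |f|`. -/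
noncomputable def hlMax (f : ℝ → ℝ) (t : ℝ) : ℝ≥0∞ :=
  ⨆ (a : ℝ) (b : ℝ) (_ : a ≤ t) (_ : t ≤ b) (_ : a < b),
    (∫⁻ y in Set.Icc a b, ENNReal.ofReal |f y|) / ENNReal.ofReal (b - a)

open Set Filter Topology

namespace ENNReal

theorem rpow_one_div_le_mul_rpow_one_div_iff {a b c : ℝ≥0∞} {p : ℝ} (hp : 0 < p) :
    a ^ (1 / p) ≤ c * b ^ (1 / p) ↔ a ≤ c ^ p * b := by
  rw [show c * b ^ (1 / p) = (c ^ p * b) ^ (1 / p) by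
      rw [mul_rpow_of_nonneg _ _ (one_div_pos.2 hp).le, ← rpow_mul, mul_one_div_cancel hp.ne',
        rpow_one],
    rpow_le_rpow_iff (one_div_pos.2 hp)]

theorem le_of_forall_natCast_mul_le {a b : ℝ≥0∞} (K : ℕ)
    (h : ∀ L : ℕ, L * a ≤ (L + K) * b) : a ≤ b := by
  rcases eq_top_or_lt_top b with rfl | hb
  · exact le_top
  have hbound : ∀ L : ℕ, 0 < L → a ≤ b + K * b * (L : ℝ≥0∞)⁻¹ := fun L hL => by
    have hL0 : (L : ℝ≥0∞) ≠ 0 := by exact_mod_cast hL.ne'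
    calc a = L * a * (L : ℝ≥0∞)⁻¹ := by
          rw [mul_comm, ← mul_assoc, ENNReal.inv_mul_cancel hL0 (natCast_ne_top L), one_mul]
      _ ≤ (L + K) * b * (L : ℝ≥0∞)⁻¹ := by gcongr ?_ * _; exact h L
      _ = b + K * b * (L : ℝ≥0∞)⁻¹ := by
          rw [add_mul, add_mul, mul_comm (L : ℝ≥0∞) b, mul_assoc,
            ENNReal.mul_inv_cancel hL0 (natCast_ne_top L), mul_one]
  have hlim : Tendsto (fun L : ℕ => b + K * b * (L : ℝ≥0∞)⁻¹) atTop (𝓝 b) := by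
    simpa using tendsto_const_nhds.add
      (ENNReal.Tendsto.const_mul ENNReal.tendsto_inv_nat_nhds_zero
        (Or.inr (mul_ne_top (natCast_ne_top K) hb.ne)))
  exact ge_of_tendsto hlim (eventually_atTop.2 ⟨1, fun L hL => hbound L hL⟩)

theorem tsum_iSup_of_monotone {α : Type*} {g : ℕ → α → ℝ≥0∞} (hg : Monotone g) :
    ∑' j, ⨆ N, g N j = ⨆ N, ∑' j, g N j := by
  simp_rw [ENNReal.tsum_eq_iSup_sum, ENNReal.finsetSum_iSup_of_monotone fun j _ _ h => hg h j]
  exact iSup_comm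

end ENNReal

noncomputable def ellNormPow (r p : ℝ) (v : ℕ → ℝ≥0∞) : ℝ≥0∞ := (∑' j, v j ^ r) ^ (p / r)

section ellNormPow

variable {r p : ℝ}

theorem ellNormPow_mono (hr : 0 ≤ r) (hp : 0 ≤ p) {v w : ℕ → ℝ≥0∞} (hvw : v ≤ w) :
    ellNormPow r p v ≤ ellNormPow r p w :=
  rpow_le_rpow (ENNReal.tsum_le_tsum fun j => rpow_le_rpow (hvw j) hr) (div_nonneg hp hr)

theorem ellNormPow_zero (hr : 0 < r) (hp : 0 < p) : ellNormPow r p (fun _ => 0) = 0 := by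
  simp [ellNormPow, zero_rpow_of_pos hr, zero_rpow_of_pos (div_pos hp hr)]

theorem ellNormPow_iSup (hr : 0 < r) (hp : 0 < p) {v : ℕ → ℕ → ℝ≥0∞} (hv : Monotone v) :
    ellNormPow r p (fun j => ⨆ N, v N j) = ⨆ N, ellNormPow r p (v N) := by
  simp only [ellNormPow, ← orderIsoRpow_apply r hr, ← orderIsoRpow_apply (p / r) (div_pos hp hr),
    OrderIso.map_iSup]
  rw [ENNReal.tsum_iSup_of_monotone fun N N' h j => (orderIsoRpow r hr).monotone (hv h j),
    OrderIso.map_iSup]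

theorem Measurable.ellNormPow {X : Type*} [MeasurableSpace X] {v : ℕ → X → ℝ≥0∞}
    (hv : ∀ j, Measurable (v j)) : Measurable fun x => ellNormPow r p fun j => v j x :=
  (Measurable.tsum fun j => (hv j).pow_const r).pow_const (p / r)

end ellNormPow

theorem setLIntegral_Ico_natFloor (w : ℕ → ℝ≥0∞) (a n : ℕ) :
    ∫⁻ t in Ico (a : ℝ) (a + n), w ⌊t⌋₊ = ∑ k ∈ Finset.range n, w (a + k) := by
  induction n with
  | zero => simp
  | succ n ih =>
    have hfloor : ∀ t ∈ Ico ((a : ℝ) + n) (a + n + 1), w ⌊t⌋₊ = w (a + n) := fun t ht => by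
      congr 1
      rw [Nat.floor_eq_iff (by linarith [ht.1, (a + n : ℕ).cast_nonneg (α := ℝ)])]
      exact_mod_cast ht
    rw [Nat.cast_succ, ← add_assoc, ← Ico_union_Ico_eq_Ico (b := (a : ℝ) + n)
      (le_add_of_nonneg_right n.cast_nonneg) (le_add_of_nonneg_right zero_le_one),
      lintegral_union measurableSet_Ico Ico_disjoint_Ico_same, ih, Finset.sum_range_succ,
      setLIntegral_congr_fun measurableSet_Ico hfloor]
    simp [Real.volume_Ico]

noncomputable def truncStep (a : ℕ → ℝ) (M : ℕ) : ℝ → ℝ :=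
  (Ico (0 : ℝ) M).indicator fun t => a ⌊t⌋₊

theorem measurable_truncStep (a : ℕ → ℝ) (M : ℕ) : Measurable (truncStep a M) :=
  ((measurable_of_countable a).comp Nat.measurable_floor).indicator measurableSet_Ico

theorem lintegral_truncStep (Φ : (ℕ → ℝ) → ℝ≥0∞) (hΦ : Φ 0 = 0) (a : ℕ → ℕ → ℝ) (M : ℕ) :
    ∫⁻ t, Φ (fun j => truncStep (a j) M t) = ∑ m ∈ Finset.range M, Φ (fun j => a j m) := by
  have hind : (fun t => Φ fun j => truncStep (a j) M t) =
      (Ico (0 : ℝ) M).indicator fun t => Φ fun j => a j ⌊t⌋₊ := by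
    ext t
    by_cases ht : t ∈ Ico (0 : ℝ) M
    · simp [truncStep, ht]
    · simp only [truncStep, indicator_of_notMem ht]
      exact hΦ
  rw [hind, lintegral_indicator measurableSet_Ico]
  simpa using setLIntegral_Ico_natFloor (fun m => Φ fun j => a j m) 0 M

theorem avg_le_hlMax_truncStep (a : ℕ → ℝ) {m n M : ℕ} (hM : m + n + 1 ≤ M) {t : ℝ}
    (ht : t ∈ Ico (m : ℝ) (m + 1)) :
    (∑ k ∈ Finset.range (n + 1), ENNReal.ofReal |a (m + k)|) / (n + 1)
      ≤ hlMax (truncStep a M) t := by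
  have hstep : ∀ y ∈ Ico (m : ℝ) (m + (n + 1 : ℕ)),
      ENNReal.ofReal |truncStep a M y| = ENNReal.ofReal |a ⌊y⌋₊| := fun y hy => by
    have hyM : y ∈ Ico (0 : ℝ) M :=
      ⟨(m.cast_nonneg).trans hy.1, hy.2.trans_le (by exact_mod_cast hM)⟩
    simp [truncStep, hyM]
  have hlen : ENNReal.ofReal ((m : ℝ) + (n + 1 : ℕ) - m) = (n + 1 : ℝ≥0∞) := by
    rw [add_sub_cancel_left, ENNReal.ofReal_natCast, Nat.cast_succ]
  calc (∑ k ∈ Finset.range (n + 1), ENNReal.ofReal |a (m + k)|) / (n + 1)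
      = (∫⁻ y in Ico (m : ℝ) (m + (n + 1 : ℕ)), ENNReal.ofReal |truncStep a M y|)
          / ENNReal.ofReal ((m : ℝ) + (n + 1 : ℕ) - m) := by
        rw [setLIntegral_congr_fun measurableSet_Ico hstep,
          setLIntegral_Ico_natFloor (fun k => ENNReal.ofReal |a k|), hlen]
    _ ≤ (∫⁻ y in Icc (m : ℝ) (m + (n + 1 : ℕ)), ENNReal.ofReal |truncStep a M y|)
          / ENNReal.ofReal ((m : ℝ) + (n + 1 : ℕ) - m) := by
        gcongr
        exact Ico_subset_Icc_self
    _ ≤ hlMax (truncStep a M) t := by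
        refine le_iSup_of_le (m : ℝ) <| le_iSup_of_le _ <| le_iSup_of_le ht.1 <|
          le_iSup_of_le ?_ <| le_iSup_of_le ?_ le_rfl
        · push_cast; linarith [ht.2, n.cast_nonneg (α := ℝ)]
        · push_cast; linarith [n.cast_nonneg (α := ℝ)]

section Ergodic

variable {X : Type*}

noncomputable def ergAvg (τ : X → X) (f : X → ℝ) (n : ℕ) (x : X) : ℝ≥0∞ :=
  (∑ k ∈ Finset.range (n + 1), ENNReal.ofReal |f (τ^[k] x)|) / (n + 1)

noncomputable def ergMaxTrunc (τ : X → X) (f : X → ℝ) (N : ℕ) (x : X) : ℝ≥0∞ :=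
  ⨆ (n : ℕ) (_ : n ≤ N), ergAvg τ f n x

theorem ergMaxTrunc_mono (τ : X → X) (f : X → ℝ) (x : X) :
    Monotone fun N => ergMaxTrunc τ f N x := fun _ _ hN =>
  biSup_mono fun _ hn => hn.trans hN

theorem iSup_ergMaxTrunc (τ : X → X) (f : X → ℝ) (x : X) :
    ⨆ N, ergMaxTrunc τ f N x = ergMax τ f x :=
  le_antisymm (iSup_le fun _ => iSup₂_le fun n _ => le_iSup (ergAvg τ f · x) n)
    (iSup_le fun n => le_iSup_of_le n (le_iSup₂_of_le n le_rfl le_rfl))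

theorem measurable_ergMaxTrunc [MeasurableSpace X] {τ : X → X} (hτ : Measurable τ)
    {f : X → ℝ} (hf : Measurable f) (N : ℕ) : Measurable (ergMaxTrunc τ f N) :=
  Measurable.iSup fun _ => Measurable.iSup fun _ =>
    (Finset.measurable_sum _ fun k _ => (hf.comp (hτ.iterate k)).abs.ennreal_ofReal).div_const _

theorem ergMaxTrunc_iterate_le_hlMax (τ : X → X) (f : X → ℝ) (x : X) {N L m : ℕ} (hm : m < L)
    {t : ℝ} (ht : t ∈ Ico (m : ℝ) (m + 1)) :
    ergMaxTrunc τ f N (τ^[m] x) ≤ hlMax (truncStep (fun k => f (τ^[k] x)) (L + (N + 1))) t := by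
  refine iSup₂_le fun n hn => ?_
  simp only [ergAvg, ← Function.iterate_add_apply, add_comm _ m]
  exact avg_le_hlMax_truncStep _ (by omega) ht

theorem sum_ellNormPow_ergMaxTrunc_le {r p : ℝ} (hr : 0 < r) (hp : 0 < p) {c : ℝ≥0∞}
    (hHL : ∀ u : ℕ → ℝ → ℝ, (∀ j, Measurable (u j)) →
      ∫⁻ t, ellNormPow r p (fun j => hlMax (u j) t)
        ≤ c * ∫⁻ t, ellNormPow r p (fun j => ENNReal.ofReal |u j t|))
    (τ : X → X) (f : ℕ → X → ℝ) (N L : ℕ) (x : X) :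
    ∑ m ∈ Finset.range L, ellNormPow r p (fun j => ergMaxTrunc τ (f j) N (τ^[m] x))
      ≤ c * ∑ m ∈ Finset.range (L + (N + 1)),
        ellNormPow r p (fun j => ENNReal.ofReal |f j (τ^[m] x)|) := by
  set u : ℕ → ℝ → ℝ := fun j => truncStep (fun k => f j (τ^[k] x)) (L + (N + 1))
  have hfloor : ∀ t ∈ Ico (0 : ℝ) L, t ∈ Ico (⌊t⌋₊ : ℝ) (⌊t⌋₊ + 1) ∧ ⌊t⌋₊ < L := fun t ht =>
    ⟨⟨Nat.floor_le ht.1, Nat.lt_floor_add_one t⟩, (Nat.floor_lt ht.1).2 ht.2⟩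
  calc ∑ m ∈ Finset.range L, ellNormPow r p (fun j => ergMaxTrunc τ (f j) N (τ^[m] x))
      = ∫⁻ t in Ico (0 : ℝ) L,
          ellNormPow r p (fun j => ergMaxTrunc τ (f j) N (τ^[⌊t⌋₊] x)) := by
        simpa using (setLIntegral_Ico_natFloor
          (fun m => ellNormPow r p fun j => ergMaxTrunc τ (f j) N (τ^[m] x)) 0 L).symm
    _ ≤ ∫⁻ t in Ico (0 : ℝ) L, ellNormPow r p (fun j => hlMax (u j) t) :=
        setLIntegral_mono' measurableSet_Ico fun t ht => ellNormPow_mono hr.le hp.le fun j =>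
          ergMaxTrunc_iterate_le_hlMax τ (f j) x (hfloor t ht).2 (hfloor t ht).1
    _ ≤ ∫⁻ t, ellNormPow r p (fun j => hlMax (u j) t) := setLIntegral_le_lintegral _ _
    _ ≤ c * ∫⁻ t, ellNormPow r p (fun j => ENNReal.ofReal |u j t|) :=
        hHL u fun j => measurable_truncStep _ _
    _ = c * ∑ m ∈ Finset.range (L + (N + 1)),
          ellNormPow r p (fun j => ENNReal.ofReal |f j (τ^[m] x)|) := by
        rw [lintegral_truncStep (fun v => ellNormPow r p fun j => ENNReal.ofReal |v j|)
          (by simpa using ellNormPow_zero hr hp)]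

end Ergodic

theorem MeasureTheory.MeasurePreserving.lintegral_sum_iterate {X : Type*} [MeasurableSpace X]
    {μ : Measure X} {τ : X → X} (hτ : MeasurePreserving τ μ μ) {F : X → ℝ≥0∞}
    (hF : Measurable F) (n : ℕ) :
    ∫⁻ x, ∑ m ∈ Finset.range n, F (τ^[m] x) ∂μ = n * ∫⁻ x, F x ∂μ := by
  rw [lintegral_finsetSum (f := fun m x => F (τ^[m] x)) _
    fun m _ => hF.comp (hτ.measurable.iterate m)]
  simp [(hτ.iterate _).lintegral_comp hF]

theorem MeasureTheory.MeasurePreserving.lintegral_le_of_sum_iterate_le {X : Type*}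
    [MeasurableSpace X] {μ : Measure X} {τ : X → X} (hτ : MeasurePreserving τ μ μ)
    {G H : X → ℝ≥0∞} (hG : Measurable G) (hH : Measurable H) {c : ℝ≥0∞} (K : ℕ)
    (h : ∀ L x, ∑ m ∈ Finset.range L, G (τ^[m] x) ≤ c * ∑ m ∈ Finset.range (L + K), H (τ^[m] x)) :
    ∫⁻ x, G x ∂μ ≤ c * ∫⁻ x, H x ∂μ := by
  refine ENNReal.le_of_forall_natCast_mul_le K fun L => ?_
  calc L * ∫⁻ x, G x ∂μ = ∫⁻ x, ∑ m ∈ Finset.range L, G (τ^[m] x) ∂μ :=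
        (hτ.lintegral_sum_iterate hG L).symm
    _ ≤ ∫⁻ x, c * ∑ m ∈ Finset.range (L + K), H (τ^[m] x) ∂μ := lintegral_mono (h L)
    _ = (L + K) * (c * ∫⁻ x, H x ∂μ) := by
        rw [lintegral_const_mul (f := fun x => ∑ m ∈ Finset.range (L + K), H (τ^[m] x)) _
            (Finset.measurable_fun_sum _ fun m _ => hH.comp (hτ.measurable.iterate m)),
          hτ.lintegral_sum_iterate hH, Nat.cast_add, mul_left_comm]

theorem transfer_strong_type_general (r p : ℝ) (hr : 1 < r) (hp : 1 < p) (C : ℝ)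
    (hyp : ∀ f : ℕ → ℝ → ℝ, (∀ j, Measurable (f j)) →
      (∫⁻ t, (∑' j, hlMax (f j) t ^ r) ^ (p / r)) ^ (1 / p)
        ≤ ENNReal.ofReal C * (∫⁻ t, (∑' j, ENNReal.ofReal |f j t| ^ r) ^ (p / r)) ^ (1 / p))
    {X : Type*} [MeasurableSpace X] (μ : Measure X)
    (τ : X → X) (hτ : MeasurePreserving τ μ μ)
    (f : ℕ → X → ℝ) (hf : ∀ j, Measurable (f j)) :
    (∫⁻ x, (∑' j, ergMax τ (f j) x ^ r) ^ (p / r) ∂μ) ^ (1 / p)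
      ≤ ENNReal.ofReal C *
        (∫⁻ x, (∑' j, ENNReal.ofReal |f j x| ^ r) ^ (p / r) ∂μ) ^ (1 / p) := by
  have hr0 : 0 < r := one_pos.trans hr
  have hp0 : 0 < p := one_pos.trans hp
  have hmeas : ∀ N, Measurable fun x => ellNormPow r p fun j => ergMaxTrunc τ (f j) N x :=
    fun N => Measurable.ellNormPow fun j => measurable_ergMaxTrunc hτ.measurable (hf j) N
  have hsup : ∀ x, ellNormPow r p (fun j => ergMax τ (f j) x)
      = ⨆ N, ellNormPow r p fun j => ergMaxTrunc τ (f j) N x := fun x => by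
    simp_rw [← iSup_ergMaxTrunc]
    exact ellNormPow_iSup hr0 hp0 fun _ _ hN j => ergMaxTrunc_mono τ (f j) x hN
  refine (ENNReal.rpow_one_div_le_mul_rpow_one_div_iff hp0).2 ?_
  calc ∫⁻ x, ellNormPow r p (fun j => ergMax τ (f j) x) ∂μ
      = ⨆ N, ∫⁻ x, ellNormPow r p (fun j => ergMaxTrunc τ (f j) N x) ∂μ := by
        simp_rw [hsup]
        exact lintegral_iSup hmeas fun _ _ hN x =>
          ellNormPow_mono hr0.le hp0.le fun j => ergMaxTrunc_mono τ (f j) x hN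
    _ ≤ ENNReal.ofReal C ^ p * ∫⁻ x, ellNormPow r p (fun j => ENNReal.ofReal |f j x|) ∂μ :=
        iSup_le fun N => hτ.lintegral_le_of_sum_iterate_le (hmeas N)
          (Measurable.ellNormPow fun j => (hf j).abs.ennreal_ofReal) (N + 1)
          (sum_ellNormPow_ergMaxTrunc_le hr0 hp0
            (fun u hu => (ENNReal.rpow_one_div_le_mul_rpow_one_div_iff hp0).1 (hyp u hu)) τ f N)

theorem transfer_strong_type (r p : ℝ) (hr : 1 < r) (hp : 1 < p) (C : ℝ) (hC : 0 < C)
    (hyp : ∀ f : ℕ → ℝ → ℝ, (∀ j, Measurable (f j)) →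
      (∫⁻ t, (∑' j, hlMax (f j) t ^ r) ^ (p / r)) ^ (1 / p)
        ≤ ENNReal.ofReal C * (∫⁻ t, (∑' j, ENNReal.ofReal |f j t| ^ r) ^ (p / r)) ^ (1 / p))
    {X : Type*} [MeasurableSpace X] (μ : Measure X) [IsProbabilityMeasure μ]
    (τ : X → X) (hτ : MeasurePreserving τ μ μ)
    (f : ℕ → X → ℝ) (hf : ∀ j, Measurable (f j)) :
    (∫⁻ x, (∑' j, ergMax τ (f j) x ^ r) ^ (p / r) ∂μ) ^ (1 / p)
      ≤ ENNReal.ofReal C *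
        (∫⁻ x, (∑' j, ENNReal.ofReal |f j x| ^ r) ^ (p / r) ∂μ) ^ (1 / p) :=
  transfer_strong_type_general r p hr hp C hyp μ τ hτ f hf
end

section
/- If the vector-valued Hardy-Littlewood maximal operator satisfies the weak type (1,1) bound |{t ∈ ℝ : (∑_j (M f_j(t))^r)^{1/r} > λ}| ≤ (C/λ) ∫_ℝ (∑_j |f_j(t)|^r)^{1/r} dt for all λ > 0 (1 < r < ∞), then for any measure-preserving transformation τ of a probability space (X, μ), the ergodic maximal operator satisfies μ{x ∈ X : (∑_j (M♯ f_j(x))^r)^{1/r} > λ} ≤ (C/λ) ∫_X (∑_j |f_j(x)|^r)^{1/r} dμ for all λ > 0, with the same constant C. -/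
open MeasureTheory ENNReal

/-
Calderón transference. Let `E_N` be the set where the vector maximal function, with averages
truncated at length `N + 1`, exceeds `λ`. Fix a point `x` and a length `L`, and lay the orbit
values `f j (τ^[m] x)`, `m < L + N + 1`, on `ℝ` as step functions. A discrete average of length
at most `N + 1` starting at `m < L` is an average of the step function over an interval
containing `[m, m + 1)`, so the hypothesis on `ℝ` bounds the number of times `m < L` with
`τ^[m] x ∈ E_N` by `(C / λ) ∑_{m ≤ L + N} ‖f(τ^[m] x)‖_r`. Integrating over `X` with the
invariance of `μ` gives `L μ(E_N) ≤ (C / λ) (L + N + 1) ∫ ‖f‖_r`; letting `L → ∞` and then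
`N → ∞` proves the claim.
-/

lemma ENNReal.le_of_forall_natCast_mul_le_add_mul {a b K : ℝ≥0∞} (hK : K ≠ ∞)
    (h : ∀ L : ℕ, L * a ≤ (L + K) * b) : a ≤ b := by
  rcases eq_or_ne b ∞ with rfl | hb
  · exact le_top
  have hlim : Filter.Tendsto (fun L : ℕ => b + K * b * (L : ℝ≥0∞)⁻¹) Filter.atTop (nhds b) := by
    simpa using tendsto_const_nhds.add
      (ENNReal.Tendsto.const_mul ENNReal.tendsto_inv_nat_nhds_zero (Or.inr (mul_ne_top hK hb)))
  refine ge_of_tendsto hlim ?_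
  filter_upwards [Filter.eventually_ne_atTop 0] with L hL
  rw [← ENNReal.mul_le_mul_iff_right (Nat.cast_ne_zero.2 hL) (natCast_ne_top L)]
  calc (L : ℝ≥0∞) * a ≤ (L + K) * b := h L
    _ = L * (b + K * b * (L : ℝ≥0∞)⁻¹) := by
      rw [mul_add, mul_left_comm, ENNReal.mul_inv_cancel (Nat.cast_ne_zero.2 hL) (natCast_ne_top L),
        mul_one, add_mul]

noncomputable def lrNorm (r : ℝ) (a : ℕ → ℝ≥0∞) : ℝ≥0∞ :=
  (∑' j, a j ^ r) ^ (1 / r)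

lemma lrNorm_mono {r : ℝ} (hr : 0 ≤ r) : Monotone (lrNorm r) := fun _ _ h =>
  rpow_le_rpow (ENNReal.tsum_le_tsum fun j => rpow_le_rpow (h j) hr) (by positivity)

lemma lrNorm_zero {r : ℝ} (hr : 0 < r) : lrNorm r (fun _ => 0) = 0 := by
  simp [lrNorm, zero_rpow_of_pos hr, hr]

lemma Measurable.lrNorm {X : Type*} [MeasurableSpace X] (r : ℝ) {a : ℕ → X → ℝ≥0∞}
    (ha : ∀ j, Measurable (a j)) : Measurable fun x => _root_.lrNorm r fun j => a j x :=
  (Measurable.tsum fun j => (ha j).pow_const r).pow_const _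

lemma ENNReal.iSup_rpow {ι : Sort*} (u : ι → ℝ≥0∞) {p : ℝ} (hp : 0 < p) :
    (⨆ i, u i) ^ p = ⨆ i, u i ^ p := by
  simpa only [orderIsoRpow_apply] using (orderIsoRpow p hp).map_iSup u

lemma ENNReal.tsum_iSup_of_monotone_s1 {v : ℕ → ℕ → ℝ≥0∞} (hv : Monotone v) :
    ∑' j, ⨆ N, v N j = ⨆ N, ∑' j, v N j := by
  simpa only [lintegral_count] using
    lintegral_iSup (μ := Measure.count) (fun N => measurable_from_nat) hv

lemma lrNorm_iSup_of_monotone {r : ℝ} (hr : 0 < r) {a : ℕ → ℕ → ℝ≥0∞} (ha : Monotone a) :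
    lrNorm r (fun j => ⨆ N, a N j) = ⨆ N, lrNorm r (a N) := by
  simp only [lrNorm, ENNReal.iSup_rpow _ hr]
  rw [ENNReal.tsum_iSup_of_monotone_s1 fun _ _ h j => rpow_le_rpow (ha h j) hr.le,
    ENNReal.iSup_rpow _ (one_div_pos.2 hr)]

def HasVectorWeakTypeOneOne (r C : ℝ) : Prop :=
  ∀ f : ℕ → ℝ → ℝ, (∀ j, Measurable (f j)) → ∀ lam : ℝ, 0 < lam →
    volume {t | ENNReal.ofReal lam < lrNorm r fun j => hlMax (f j) t}
      ≤ (ENNReal.ofReal C / ENNReal.ofReal lam) * ∫⁻ t, lrNorm r fun j => ENNReal.ofReal |f j t|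

lemma setLIntegral_Ico_comp_floor (v : ℕ → ℝ≥0∞) (a n : ℕ) :
    ∫⁻ t in Set.Ico (a : ℝ) (a + n), v ⌊t⌋₊ = ∑ k ∈ Finset.range n, v (a + k) := by
  induction n with
  | zero => simp
  | succ n ih =>
    have hfloor : ∀ t ∈ Set.Ico ((a : ℝ) + n) (a + n + 1), v ⌊t⌋₊ = v (a + n) := fun t ht => by
      have h0 : (0 : ℝ) ≤ t := le_trans (by positivity) ht.1
      rw [(Nat.floor_eq_iff h0).2 (by exact_mod_cast ht)]
    have hsplit : Set.Ico (a : ℝ) (a + (n + 1 : ℕ))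
        = Set.Ico (a : ℝ) (a + n) ∪ Set.Ico ((a : ℝ) + n) (a + n + 1) := by
      rw [Set.Ico_union_Ico_eq_Ico (by simp) (by simp)]
      push_cast
      ring_nf
    rw [Finset.sum_range_succ, ← ih, hsplit,
      lintegral_union measurableSet_Ico Set.Ico_disjoint_Ico_same,
      setLIntegral_congr_fun measurableSet_Ico hfloor]
    simp

lemma lintegral_indicator_Ico_comp_floor (v : ℕ → ℝ≥0∞) (M : ℕ) :
    ∫⁻ t, (Set.Ico 0 (M : ℝ)).indicator (fun t => v ⌊t⌋₊) t = ∑ m ∈ Finset.range M, v m := by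
  rw [lintegral_indicator measurableSet_Ico]
  simpa using setLIntegral_Ico_comp_floor v 0 M

noncomputable def floorStep (M : ℕ) (u : ℕ → ℝ) : ℝ → ℝ :=
  (Set.Ico 0 (M : ℝ)).indicator fun t => u ⌊t⌋₊

lemma measurable_floorStep (M : ℕ) (u : ℕ → ℝ) : Measurable (floorStep M u) :=
  (measurable_from_nat.comp Nat.measurable_floor).indicator measurableSet_Ico

lemma lrNorm_floorStep {r : ℝ} (hr : 0 < r) (M : ℕ) (u : ℕ → ℕ → ℝ) :
    (fun t => lrNorm r fun j => ENNReal.ofReal |floorStep M (u j) t|)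
      = (Set.Ico 0 (M : ℝ)).indicator fun t => lrNorm r fun j => ENNReal.ofReal |u j ⌊t⌋₊| := by
  ext t
  by_cases ht : t ∈ Set.Ico 0 (M : ℝ)
  · simp [floorStep, ht]
  · simpa [floorStep, ht] using lrNorm_zero hr

lemma avg_le_hlMax_floorStep {u : ℕ → ℝ} {M m n : ℕ} (hmn : m + n < M) {t : ℝ}
    (ht : t ∈ Set.Ico (m : ℝ) (m + 1)) :
    (∑ k ∈ Finset.range (n + 1), ENNReal.ofReal |u (m + k)|) / (n + 1)
      ≤ hlMax (floorStep M u) t := by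
  have hsub : Set.Ico (m : ℝ) (m + (n + 1 : ℕ)) ⊆ Set.Ico 0 (M : ℝ) := by
    refine Set.Ico_subset_Ico (by positivity) ?_
    exact_mod_cast hmn
  have hsum : ∑ k ∈ Finset.range (n + 1), ENNReal.ofReal |u (m + k)|
      = ∫⁻ y in Set.Ico (m : ℝ) (m + (n + 1 : ℕ)), ENNReal.ofReal |floorStep M u y| := by
    rw [← setLIntegral_Ico_comp_floor (fun k => ENNReal.ofReal |u k|)]
    refine setLIntegral_congr_fun measurableSet_Ico fun y hy => ?_
    simp [floorStep, hsub hy]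
  have hlen : ENNReal.ofReal ((m + (n + 1 : ℕ)) - m) = n + 1 := by
    rw [add_sub_cancel_left, ENNReal.ofReal_natCast]
    push_cast
    rfl
  have hn : (0 : ℝ) ≤ n := n.cast_nonneg
  have htb : t ≤ m + (n + 1 : ℕ) := by push_cast; linarith [ht.2]
  have hab : (m : ℝ) < m + (n + 1 : ℕ) := by push_cast; linarith
  rw [hsum, ← hlen]
  refine le_trans ?_ (le_iSup_of_le (m : ℝ) <| le_iSup_of_le ((m : ℝ) + (n + 1 : ℕ)) <|
    le_iSup_of_le ht.1 <| le_iSup_of_le htb <| le_iSup_of_le hab le_rfl)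
  gcongr
  exact Set.Ico_subset_Icc_self

noncomputable def maxAvgUpTo (N : ℕ) (u : ℕ → ℝ) (m : ℕ) : ℝ≥0∞ :=
  ⨆ n ≤ N, (∑ k ∈ Finset.range (n + 1), ENNReal.ofReal |u (m + k)|) / (n + 1)

lemma monotone_maxAvgUpTo (u : ℕ → ℝ) (m : ℕ) : Monotone fun N => maxAvgUpTo N u m :=
  fun _ _ h => biSup_mono fun _ hn => hn.trans h

lemma maxAvgUpTo_le_hlMax_floorStep {u : ℕ → ℝ} {M m N : ℕ} (hmN : m + N < M) {t : ℝ}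
    (ht : t ∈ Set.Ico (m : ℝ) (m + 1)) : maxAvgUpTo N u m ≤ hlMax (floorStep M u) t :=
  iSup₂_le fun _ hn => avg_le_hlMax_floorStep (by omega) ht

lemma sum_indicator_lt_lrNorm_maxAvgUpTo_le {r C lam : ℝ} (hyp : HasVectorWeakTypeOneOne r C)
    (hr : 0 < r) (hlam : 0 < lam) (u : ℕ → ℕ → ℝ) (L N : ℕ) :
    ∑ m ∈ Finset.range L,
        {m | ENNReal.ofReal lam < lrNorm r fun j => maxAvgUpTo N (u j) m}.indicator 1 m
      ≤ (ENNReal.ofReal C / ENNReal.ofReal lam)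
          * ∑ m ∈ Finset.range (L + N + 1), lrNorm r fun j => ENNReal.ofReal |u j m| := by
  set g := fun j => floorStep (L + N + 1) (u j)
  set bad : Set ℕ := {m | ENNReal.ofReal lam < lrNorm r fun j => maxAvgUpTo N (u j) m}
  have hbad : (Set.Ico 0 (L : ℝ)).indicator (fun t => bad.indicator (1 : ℕ → ℝ≥0∞) ⌊t⌋₊)
      ≤ {t | ENNReal.ofReal lam < lrNorm r fun j => hlMax (g j) t}.indicator 1 := by
    refine Set.indicator_le fun t ht => ?_
    by_cases hm : ⌊t⌋₊ ∈ bad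
    · have ht' : t ∈ Set.Ico (⌊t⌋₊ : ℝ) (⌊t⌋₊ + 1) := ⟨Nat.floor_le ht.1, Nat.lt_floor_add_one t⟩
      have hlt : ⌊t⌋₊ < L := (Nat.floor_lt ht.1).2 ht.2
      have hbig : t ∈ {t | ENNReal.ofReal lam < lrNorm r fun j => hlMax (g j) t} :=
        hm.trans_le (lrNorm_mono hr.le fun j => maxAvgUpTo_le_hlMax_floorStep (by omega) ht')
      simp only [Set.indicator_of_mem hm, Set.indicator_of_mem hbig, Pi.one_apply, le_refl]
    · simp [Set.indicator_of_notMem hm]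
  calc ∑ m ∈ Finset.range L, bad.indicator 1 m
      = ∫⁻ t, (Set.Ico 0 (L : ℝ)).indicator (fun t => bad.indicator 1 ⌊t⌋₊) t :=
        (lintegral_indicator_Ico_comp_floor _ L).symm
    _ ≤ volume {t | ENNReal.ofReal lam < lrNorm r fun j => hlMax (g j) t} :=
        (lintegral_mono hbad).trans (lintegral_indicator_one_le _)
    _ ≤ (ENNReal.ofReal C / ENNReal.ofReal lam)
          * ∫⁻ t, lrNorm r fun j => ENNReal.ofReal |g j t| :=
        hyp g (fun j => measurable_floorStep _ _) lam hlam
    _ = _ := by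
        rw [lrNorm_floorStep hr]
        exact congrArg _
          (lintegral_indicator_Ico_comp_floor (fun m => lrNorm r fun j => ENNReal.ofReal |u j m|) _)

lemma maxAvgUpTo_orbit_iterate {X : Type*} (τ : X → X) (f : X → ℝ) (N m : ℕ) (x : X) :
    maxAvgUpTo N (fun k => f (τ^[k] (τ^[m] x))) 0 = maxAvgUpTo N (fun k => f (τ^[k] x)) m := by
  simp_rw [maxAvgUpTo, zero_add, ← Function.iterate_add_apply, add_comm _ m]

lemma iSup_maxAvgUpTo_orbit {X : Type*} (τ : X → X) (f : X → ℝ) (x : X) :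
    ⨆ N, maxAvgUpTo N (fun k => f (τ^[k] x)) 0 = ergMax τ f x := by
  simp only [maxAvgUpTo, zero_add]
  exact biSup_le_eq_iSup

lemma Measurable.maxAvgUpTo_orbit {X : Type*} [MeasurableSpace X] {τ : X → X} {f : X → ℝ}
    (hf : Measurable f) (hτ : Measurable τ) (N m : ℕ) :
    Measurable fun x => maxAvgUpTo N (fun k => f (τ^[k] x)) m :=
  Measurable.iSup fun _ => Measurable.iSup fun _ => Measurable.div_const
    (Finset.measurable_sum _ fun k _ => (hf.comp (hτ.iterate (m + k))).abs.ennreal_ofReal) _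

lemma MeasureTheory.MeasurePreserving.lintegral_sum_comp_iterate {X : Type*} [MeasurableSpace X]
    {μ : Measure X} {τ : X → X} (hτ : MeasurePreserving τ μ μ) {g : X → ℝ≥0∞}
    (hg : Measurable g) (L : ℕ) :
    ∫⁻ x, ∑ m ∈ Finset.range L, g (τ^[m] x) ∂μ = L * ∫⁻ x, g x ∂μ := by
  rw [lintegral_finsetSum (f := fun m x => g (τ^[m] x)) _
    fun m _ => hg.comp (hτ.iterate m).measurable]
  simp [(hτ.iterate _).lintegral_comp hg]

lemma measure_lt_lrNorm_maxAvgUpTo_le {r C lam : ℝ} (hyp : HasVectorWeakTypeOneOne r C)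
    (hr : 0 < r) (hlam : 0 < lam) {X : Type*} [MeasurableSpace X] {μ : Measure X} {τ : X → X}
    (hτ : MeasurePreserving τ μ μ) {f : ℕ → X → ℝ} (hf : ∀ j, Measurable (f j)) (N : ℕ) :
    μ {x | ENNReal.ofReal lam < lrNorm r fun j => maxAvgUpTo N (fun k => f j (τ^[k] x)) 0}
      ≤ (ENNReal.ofReal C / ENNReal.ofReal lam)
          * ∫⁻ x, lrNorm r (fun j => ENNReal.ofReal |f j x|) ∂μ := by
  set E := {x | ENNReal.ofReal lam < lrNorm r fun j => maxAvgUpTo N (fun k => f j (τ^[k] x)) 0}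
  set F := fun x => lrNorm r fun j => ENNReal.ofReal |f j x|
  have hE : MeasurableSet E := measurableSet_lt measurable_const
    (Measurable.lrNorm r fun j => (hf j).maxAvgUpTo_orbit hτ.measurable N 0)
  have hF : Measurable F := Measurable.lrNorm r fun j => (hf j).abs.ennreal_ofReal
  have horbit : ∀ x L, ∑ m ∈ Finset.range L, E.indicator 1 (τ^[m] x)
      ≤ (ENNReal.ofReal C / ENNReal.ofReal lam) * ∑ m ∈ Finset.range (L + N + 1), F (τ^[m] x) :=
    fun x L => by
      simpa only [Set.indicator_apply, Set.mem_ofPred_eq, Pi.one_apply, E, F,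
        maxAvgUpTo_orbit_iterate] using
        sum_indicator_lt_lrNorm_maxAvgUpTo_le hyp hr hlam (fun j k => f j (τ^[k] x)) L N
  refine ENNReal.le_of_forall_natCast_mul_le_add_mul (K := N + 1) (by simp) fun L => ?_
  calc (L : ℝ≥0∞) * μ E = ∫⁻ x, ∑ m ∈ Finset.range L, E.indicator 1 (τ^[m] x) ∂μ := by
        rw [hτ.lintegral_sum_comp_iterate (measurable_one.indicator hE), lintegral_indicator_one hE]
    _ ≤ ∫⁻ x, (ENNReal.ofReal C / ENNReal.ofReal lam)
          * ∑ m ∈ Finset.range (L + N + 1), F (τ^[m] x) ∂μ := lintegral_mono (horbit · L)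
    _ = (L + (N + 1)) * ((ENNReal.ofReal C / ENNReal.ofReal lam) * ∫⁻ x, F x ∂μ) := by
        rw [lintegral_const_mul _ (Finset.measurable_sum (f := fun m x => F (τ^[m] x)) _
          fun m _ => hF.comp (hτ.iterate m).measurable), hτ.lintegral_sum_comp_iterate hF]
        push_cast
        ring

theorem transfer_weak_type_general (r : ℝ) (hr : 1 < r) (C : ℝ)
    (hyp : ∀ f : ℕ → ℝ → ℝ, (∀ j, Measurable (f j)) → ∀ lam : ℝ, 0 < lam →
      volume {t : ℝ | ENNReal.ofReal lam < (∑' j, hlMax (f j) t ^ r) ^ (1 / r)}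
        ≤ (ENNReal.ofReal C / ENNReal.ofReal lam) *
            ∫⁻ t, (∑' j, ENNReal.ofReal |f j t| ^ r) ^ (1 / r))
    {X : Type*} [MeasurableSpace X] (μ : Measure X)
    (τ : X → X) (hτ : MeasurePreserving τ μ μ)
    (f : ℕ → X → ℝ) (hf : ∀ j, Measurable (f j)) (lam : ℝ) (hlam : 0 < lam) :
    μ {x : X | ENNReal.ofReal lam < (∑' j, ergMax τ (f j) x ^ r) ^ (1 / r)}
      ≤ (ENNReal.ofReal C / ENNReal.ofReal lam) *
          ∫⁻ x, (∑' j, ENNReal.ofReal |f j x| ^ r) ^ (1 / r) ∂μ := by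
  have hr0 : 0 < r := one_pos.trans hr
  set E : ℕ → Set X := fun N =>
    {x | ENNReal.ofReal lam < lrNorm r fun j => maxAvgUpTo N (fun k => f j (τ^[k] x)) 0}
  have hE : Monotone E := fun _ _ h _ hx =>
    hx.trans_le (lrNorm_mono hr0.le fun j => monotone_maxAvgUpTo _ _ h)
  have hunion : {x | ENNReal.ofReal lam < lrNorm r fun j => ergMax τ (f j) x} = ⋃ N, E N := by
    ext x
    simp only [Set.mem_ofPred_eq, Set.mem_iUnion, E, ← iSup_maxAvgUpTo_orbit]
    rw [lrNorm_iSup_of_monotone hr0 (a := fun N j => maxAvgUpTo N (fun k => f j (τ^[k] x)) 0)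
      fun _ _ h j => monotone_maxAvgUpTo _ _ h, lt_iSup_iff]
  calc μ {x | ENNReal.ofReal lam < lrNorm r fun j => ergMax τ (f j) x}
      = ⨆ N, μ (E N) := by rw [hunion, hE.measure_iUnion]
    _ ≤ _ := iSup_le fun N => measure_lt_lrNorm_maxAvgUpTo_le hyp hr0 hlam hτ hf N

theorem transfer_weak_type (r : ℝ) (hr : 1 < r) (C : ℝ) (hC : 0 < C)
    (hyp : ∀ f : ℕ → ℝ → ℝ, (∀ j, Measurable (f j)) → ∀ lam : ℝ, 0 < lam →
      volume {t : ℝ | ENNReal.ofReal lam < (∑' j, hlMax (f j) t ^ r) ^ (1 / r)}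
        ≤ (ENNReal.ofReal C / ENNReal.ofReal lam) *
            ∫⁻ t, (∑' j, ENNReal.ofReal |f j t| ^ r) ^ (1 / r))
    {X : Type*} [MeasurableSpace X] (μ : Measure X) [IsProbabilityMeasure μ]
    (τ : X → X) (hτ : MeasurePreserving τ μ μ)
    (f : ℕ → X → ℝ) (hf : ∀ j, Measurable (f j)) (lam : ℝ) (hlam : 0 < lam) :
    μ {x : X | ENNReal.ofReal lam < (∑' j, ergMax τ (f j) x ^ r) ^ (1 / r)}
      ≤ (ENNReal.ofReal C / ENNReal.ofReal lam) *
          ∫⁻ x, (∑' j, ENNReal.ofReal |f j x| ^ r) ^ (1 / r) ∂μ :=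
  transfer_weak_type_general r hr C hyp μ τ hτ f hf lam hlam
end
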